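/- arXiv:2202.07813 — 2 statements merged into one kernel-verified Lean document; each statement's English description precedes it below -/
import Mathlib

section
/- Let T ≥ 0 and let M : [T,∞) → ℝ be continuous such that the improper integral ∫_t^∞ M(s) ds converges for every t ≥ T. Define q₁(t) := M(t), Q_k(t) := −∫_t^∞ q_k(s) ds for k ≥ 1, and q_k(t) := Σ_{j=1}^{k−1} Q_j(t) Q_{k−j}(t) for k ≥ 2, assuming all these improper integrals converge, and set φ(t) := −∫_t^∞ Q₂(s) ds, assumed finite. Suppose that for all t ≥ T one has |∫_t^∞ Q₁(s) ds| ≤ 1 and φ(t) ≤ 6^{−4}. Then for all t ≥ T the series Σ_{k=2}^∞ |Q_k(t)| converges and Σ_{k=2}^∞ |Q_k(t)| ≤ (3/2)|Q₂(t)|. -/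
/-!
By induction on `k`, `|Q_k(t)| ≤ C_{k-1} (-Q₂(t)) √φ(t)^(k-2)` with `C_n` the Catalan numbers.
Since `Q_k` is minus the tail integral of `∑ Q_j Q_{k-j}`, Cauchy–Schwarz bounds each product by
the `L²` norms of `Q_j` and `Q_{k-j}` on `[t, ∞)`. For `j = 1` that norm is `√(-Q₂(t))` because
`Q₁² = q₂`; for `j ≥ 2` it follows from the pointwise bound, the monotonicity of `Q₂` and `φ`, and
`∫_t^∞ (-Q₂) = φ(t)`. Catalan's recursion then closes the induction. As `C_n ≤ 4^n` and
`√φ ≤ 1/36`, the terms with `k ≥ 3` are at most `(4/9) |Q₂(t)| 9^(3-k)`, which sum to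
`|Q₂(t)|/2`.
-/

open MeasureTheory Filter Topology Set

def IsNegTailIntegral (T : ℝ) (g G : ℝ → ℝ) : Prop :=
  ∀ t ≥ T, Tendsto (fun R => ∫ s in t..R, g s) atTop (𝓝 (-G t))

namespace IsNegTailIntegral

variable {T t u R B : ℝ} {g G : ℝ → ℝ}

theorem neg (h : IsNegTailIntegral T g G) :
    IsNegTailIntegral T (fun s => -g s) (fun s => -G s) :=
  fun t ht => by simpa only [intervalIntegral.integral_neg] using (h t ht).neg

theorem abs_le (h : IsNegTailIntegral T g G) (ht : T ≤ t)
    (hB : ∀ R ≥ t, |∫ x in t..R, g x| ≤ B) : |G t| ≤ B := by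
  simpa only [abs_neg] using le_of_tendsto (h t ht).abs (eventually_ge_atTop t |>.mono hB)

theorem nonpos (h : IsNegTailIntegral T g G) (ht : T ≤ t) (hg : ∀ s ≥ t, 0 ≤ g s) : G t ≤ 0 := by
  have : 0 ≤ -G t := ge_of_tendsto (h t ht) <| (eventually_ge_atTop t).mono fun R hR =>
    intervalIntegral.integral_nonneg hR fun s hs => hg s hs.1
  linarith

theorem eq_add_integral (h : IsNegTailIntegral T g G) (hg : ContinuousOn g (Ici T))
    (ht : T ≤ t) (htu : t ≤ u) : G u = G t + ∫ x in t..u, g x := by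
  have hint : ∀ a b, T ≤ a → T ≤ b → IntervalIntegrable g volume a b := fun a b ha hb =>
    (hg.mono fun x hx => (le_min ha hb).trans hx.1).intervalIntegrable
  have hsplit : (fun R => (∫ x in t..u, g x) + ∫ x in u..R, g x) =ᶠ[atTop]
      fun R => ∫ x in t..R, g x :=
    (eventually_ge_atTop u).mono fun R hR =>
      intervalIntegral.integral_add_adjacent_intervals (hint t u ht (ht.trans htu))
        (hint u R (ht.trans htu) (ht.trans (htu.trans hR)))
  have := tendsto_nhds_unique (((h u (ht.trans htu)).const_add _).congr' hsplit) (h t ht)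
  linarith

theorem continuousOn (h : IsNegTailIntegral T g G) (hg : ContinuousOn g (Ici T)) :
    ContinuousOn G (Ici T) := by
  refine continuousOn_of_locally_continuousOn fun u (hu : T ≤ u) =>
    ⟨Iio (u + 1), isOpen_Iio, lt_add_one u, ?_⟩
  rw [Ici_inter_Iio]
  have hprim : ContinuousOn (fun x => G T + ∫ s in T..x, g s) (Icc T (u + 1)) := by
    rw [← uIcc_of_le (by linarith)]
    refine continuousOn_const.add (intervalIntegral.continuousOn_primitive_interval ?_)
    rw [uIcc_of_le (by linarith)]
    exact (hg.mono Icc_subset_Ici_self).integrableOn_Icc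
  exact (hprim.mono Ico_subset_Icc_self).congr fun x hx => h.eq_add_integral hg le_rfl hx.1

theorem monotoneOn (h : IsNegTailIntegral T g G) (hg : ContinuousOn g (Ici T))
    (hg0 : ∀ s ≥ T, 0 ≤ g s) : MonotoneOn G (Ici T) := fun t ht u _ htu => by
  have : 0 ≤ ∫ x in t..u, g x :=
    intervalIntegral.integral_nonneg htu fun s hs => hg0 s (le_trans ht hs.1)
  linarith [h.eq_add_integral hg ht htu]

theorem integral_le_neg (h : IsNegTailIntegral T g G) (hg : ContinuousOn g (Ici T))
    (hg0 : ∀ s ≥ T, 0 ≤ g s) (ht : T ≤ t) (htR : t ≤ R) : ∫ x in t..R, g x ≤ -G t := by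
  have := h.nonpos (ht.trans htR) fun s hs => hg0 s (ht.trans (htR.trans hs))
  linarith [h.eq_add_integral hg ht htR]

end IsNegTailIntegral

theorem catalan_le_four_pow (n : ℕ) : catalan n ≤ 4 ^ n :=
  calc catalan n = n.centralBinom / (n + 1) := catalan_eq_centralBinom_div n
    _ ≤ n.centralBinom := Nat.div_le_self _ _
    _ ≤ 4 ^ n := Nat.centralBinom_le_four_pow n

theorem sum_Ico_catalan_pred_mul {k : ℕ} (hk : 2 ≤ k) :
    ∑ j ∈ Finset.Ico 1 k, catalan (j - 1) * catalan (k - j - 1) = catalan (k - 1) := by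
  obtain ⟨n, rfl⟩ : ∃ n, k = n + 2 := ⟨k - 2, by omega⟩
  rw [show n + 2 - 1 = n + 1 by omega, catalan_succ',
    Finset.Nat.sum_antidiagonal_eq_sum_range_succ_mk, Finset.sum_Ico_eq_sum_range]
  refine Finset.sum_congr (by congr 1) fun i hi => ?_
  rw [Finset.mem_range] at hi
  congr 2 <;> omega

theorem integral_abs_mul_le_sqrt_mul_sqrt {α : Type*} [MeasurableSpace α] {μ : Measure α}
    {f g : α → ℝ} (hf : MemLp f 2 μ) (hg : MemLp g 2 μ) :
    ∫ a, |f a * g a| ∂μ ≤ √(∫ a, f a ^ 2 ∂μ) * √(∫ a, g a ^ 2 ∂μ) := by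
  have h := integral_mul_norm_le_Lp_mul_Lq Real.HolderConjugate.two_two
    (by simpa using hf) (by simpa using hg)
  simpa [abs_mul, Real.sqrt_eq_rpow] using h

theorem summable_and_tsum_le_of_le_geometric {a : ℕ → ℝ} {C r : ℝ} (ha : ∀ n, 0 ≤ a n)
    (h : ∀ n, a n ≤ C * r ^ n) (hr0 : 0 ≤ r) (hr1 : r < 1) :
    Summable a ∧ ∑' n, a n ≤ C * (1 - r)⁻¹ := by
  have hgeo := (summable_geometric_of_lt_one hr0 hr1).mul_left C
  have hs := Summable.of_nonneg_of_le ha h hgeo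
  refine ⟨hs, ?_⟩
  calc ∑' n, a n ≤ ∑' n, C * r ^ n := hs.tsum_le_tsum h hgeo
    _ = C * (1 - r)⁻¹ := by rw [tsum_mul_left, tsum_geometric_of_lt_one hr0 hr1]

theorem integral_abs_mul_le_of_integral_sq_le {f g : ℝ → ℝ} {t R a b B : ℝ} (htR : t ≤ R)
    (hf : ContinuousOn f (Icc t R)) (hg : ContinuousOn g (Icc t R))
    (ha : 0 ≤ a) (hb : 0 ≤ b) (hB : 0 ≤ B)
    (hf2 : ∫ x in t..R, f x ^ 2 ≤ a ^ 2 * B) (hg2 : ∫ x in t..R, g x ^ 2 ≤ b ^ 2 * B) :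
    ∫ x in t..R, |f x * g x| ≤ a * b * B := by
  have memLp : ∀ f : ℝ → ℝ, ContinuousOn f (Icc t R) →
      MemLp f 2 (volume.restrict (Ioc t R)) :=
    fun f hf => (memLp_two_iff_integrable_sq
      ((hf.mono Ioc_subset_Icc_self).aestronglyMeasurable measurableSet_Ioc)).2
      ((hf.pow 2).integrableOn_Icc.mono_set Ioc_subset_Icc_self)
  rw [intervalIntegral.integral_of_le htR] at hf2 hg2 ⊢
  calc ∫ x in Ioc t R, |f x * g x|
      ≤ √(∫ x in Ioc t R, f x ^ 2) * √(∫ x in Ioc t R, g x ^ 2) :=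
        integral_abs_mul_le_sqrt_mul_sqrt (memLp f hf) (memLp g hg)
    _ ≤ √(a ^ 2 * B) * √(b ^ 2 * B) := by gcongr
    _ = a * b * B := by
        rw [Real.sqrt_mul' _ hB, Real.sqrt_mul' _ hB, Real.sqrt_sq ha, Real.sqrt_sq hb,
          mul_mul_mul_comm, Real.mul_self_sqrt hB]

structure TailHierarchy (T : ℝ) (q Q : ℕ → ℝ → ℝ) (φ : ℝ → ℝ) : Prop where
  continuousOn_q_one : ContinuousOn (q 1) (Ici T)
  q_eq_sum : ∀ k, 2 ≤ k → ∀ t, q k t = ∑ j ∈ Finset.Ico 1 k, Q j t * Q (k - j) t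
  tail_q : ∀ k, 1 ≤ k → IsNegTailIntegral T (q k) (Q k)
  tail_Q_two : IsNegTailIntegral T (Q 2) φ

namespace TailHierarchy

variable {T t R : ℝ} {q Q : ℕ → ℝ → ℝ} {φ : ℝ → ℝ} {k : ℕ}

theorem continuousOn_q_of_Q (H : TailHierarchy T q Q φ) (hk : 1 ≤ k)
    (hQ : ∀ j, 1 ≤ j → j < k → ContinuousOn (Q j) (Ici T)) : ContinuousOn (q k) (Ici T) := by
  rcases hk.eq_or_lt with rfl | hk
  · exact H.continuousOn_q_one
  · refine (continuousOn_finsetSum _ fun j hj => ?_).congr fun t _ => H.q_eq_sum k hk t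
    rw [Finset.mem_Ico] at hj
    exact (hQ j hj.1 hj.2).mul (hQ (k - j) (by omega) (by omega))

theorem continuousOn_Q (H : TailHierarchy T q Q φ) (hk : 1 ≤ k) :
    ContinuousOn (Q k) (Ici T) := by
  induction k using Nat.strong_induction_on with
  | _ k ih =>
    exact (H.tail_q k hk).continuousOn (H.continuousOn_q_of_Q hk fun j hj hjk => ih j hjk hj)

theorem continuousOn_q (H : TailHierarchy T q Q φ) (hk : 1 ≤ k) : ContinuousOn (q k) (Ici T) :=
  H.continuousOn_q_of_Q hk fun _ hj _ => H.continuousOn_Q hj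

theorem q_two (H : TailHierarchy T q Q φ) (t : ℝ) : q 2 t = Q 1 t ^ 2 := by
  simp [H.q_eq_sum 2 le_rfl, sq]

theorem q_two_nonneg (H : TailHierarchy T q Q φ) (t : ℝ) : 0 ≤ q 2 t := by
  rw [H.q_two]; positivity

theorem Q_two_nonpos (H : TailHierarchy T q Q φ) (ht : T ≤ t) : Q 2 t ≤ 0 :=
  (H.tail_q 2 one_le_two).nonpos ht fun s _ => H.q_two_nonneg s

theorem monotoneOn_Q_two (H : TailHierarchy T q Q φ) : MonotoneOn (Q 2) (Ici T) :=
  (H.tail_q 2 one_le_two).monotoneOn (H.continuousOn_q one_le_two) fun s _ => H.q_two_nonneg s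

theorem integral_Q_one_sq_le (H : TailHierarchy T q Q φ) (ht : T ≤ t) (htR : t ≤ R) :
    ∫ x in t..R, Q 1 x ^ 2 ≤ -Q 2 t := by
  simpa only [H.q_two] using (H.tail_q 2 one_le_two).integral_le_neg
    (H.continuousOn_q one_le_two) (fun s _ => H.q_two_nonneg s) ht htR

theorem phi_nonneg (H : TailHierarchy T q Q φ) (ht : T ≤ t) : 0 ≤ φ t :=
  neg_nonpos.1 <| H.tail_Q_two.neg.nonpos ht fun _ hs =>
    neg_nonneg.2 (H.Q_two_nonpos (ht.trans hs))

theorem antitoneOn_phi (H : TailHierarchy T q Q φ) : AntitoneOn φ (Ici T) := fun _ ht _ hu htu =>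
  neg_le_neg_iff.1 <| H.tail_Q_two.neg.monotoneOn (H.continuousOn_Q one_le_two).neg
    (fun _ hs => neg_nonneg.2 (H.Q_two_nonpos hs)) ht hu htu

theorem integral_neg_Q_two_le (H : TailHierarchy T q Q φ) (ht : T ≤ t) (htR : t ≤ R) :
    ∫ x in t..R, -Q 2 x ≤ φ t := by
  simpa using H.tail_Q_two.neg.integral_le_neg (H.continuousOn_Q one_le_two).neg
    (fun _ hs => neg_nonneg.2 (H.Q_two_nonpos hs)) ht htR

theorem integral_sq_le_of_abs_le (H : TailHierarchy T q Q φ) (ht : T ≤ t) (htR : t ≤ R)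
    {f : ℝ → ℝ} (hf : ContinuousOn f (Icc t R)) {C : ℝ} {n : ℕ}
    (hfb : ∀ x ∈ Icc t R, |f x| ≤ C * -Q 2 x * √(φ x) ^ n) :
    ∫ x in t..R, f x ^ 2 ≤ (C * √(φ t) ^ (n + 1)) ^ 2 * -Q 2 t := by
  have hQt : 0 ≤ -Q 2 t := neg_nonneg.2 (H.Q_two_nonpos ht)
  have hpt : ∀ x ∈ Icc t R, f x ^ 2 ≤ (C * √(φ t) ^ n) ^ 2 * -Q 2 t * -Q 2 x := by
    intro x hx
    have hTx : T ≤ x := ht.trans hx.1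
    have hQx : 0 ≤ -Q 2 x := neg_nonneg.2 (H.Q_two_nonpos hTx)
    have hQ : -Q 2 x ≤ -Q 2 t := neg_le_neg (H.monotoneOn_Q_two ht hTx hx.1)
    have hψ : √(φ x) ≤ √(φ t) := Real.sqrt_le_sqrt (H.antitoneOn_phi ht hTx hx.1)
    calc f x ^ 2 ≤ (C * -Q 2 x * √(φ x) ^ n) ^ 2 := by
          rw [← sq_abs]; exact pow_le_pow_left₀ (abs_nonneg _) (hfb x hx) 2
      _ = C ^ 2 * (-Q 2 x * -Q 2 x) * (√(φ x) ^ n) ^ 2 := by ring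
      _ ≤ C ^ 2 * (-Q 2 t * -Q 2 x) * (√(φ t) ^ n) ^ 2 := by gcongr
      _ = (C * √(φ t) ^ n) ^ 2 * -Q 2 t * -Q 2 x := by ring
  have hsub : Icc t R ⊆ Ici T := fun x hx => ht.trans hx.1
  calc ∫ x in t..R, f x ^ 2 ≤ ∫ x in t..R, (C * √(φ t) ^ n) ^ 2 * -Q 2 t * -Q 2 x :=
        intervalIntegral.integral_mono_on htR
          (ContinuousOn.intervalIntegrable_of_Icc htR (hf.pow 2))
          (ContinuousOn.intervalIntegrable_of_Icc htR
            (continuousOn_const.mul ((H.continuousOn_Q one_le_two).mono hsub).neg)) hpt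
    _ = (C * √(φ t) ^ n) ^ 2 * -Q 2 t * ∫ x in t..R, -Q 2 x :=
        intervalIntegral.integral_const_mul _ _
    _ ≤ (C * √(φ t) ^ n) ^ 2 * -Q 2 t * φ t := by gcongr; exact H.integral_neg_Q_two_le ht htR
    _ = (C * √(φ t) ^ (n + 1)) ^ 2 * -Q 2 t := by
        linear_combination -((C * √(φ t) ^ n) ^ 2 * -Q 2 t) * Real.sq_sqrt (H.phi_nonneg ht)

theorem abs_Q_le_of_integral_sq_le (H : TailHierarchy T q Q φ) (hk : 2 ≤ k) (ht : T ≤ t)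
    {c : ℕ → ℝ} (hc : ∀ j, 0 ≤ c j)
    (hL2 : ∀ j, 1 ≤ j → j < k → ∀ R ≥ t,
      ∫ x in t..R, Q j x ^ 2 ≤ (c j * √(φ t) ^ (j - 1)) ^ 2 * -Q 2 t) :
    |Q k t| ≤ (∑ j ∈ Finset.Ico 1 k, c j * c (k - j)) * -Q 2 t * √(φ t) ^ (k - 2) := by
  refine (H.tail_q k (by omega)).abs_le ht fun R htR => ?_
  have hcont : ∀ j, 1 ≤ j → ContinuousOn (Q j) (Icc t R) :=
    fun j hj => (H.continuousOn_Q hj).mono fun x hx => ht.trans hx.1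
  have hterm : ∀ j ∈ Finset.Ico 1 k, ∫ x in t..R, |Q j x * Q (k - j) x|
      ≤ c j * c (k - j) * -Q 2 t * √(φ t) ^ (k - 2) := by
    intro j hj
    rw [Finset.mem_Ico] at hj
    calc ∫ x in t..R, |Q j x * Q (k - j) x|
        ≤ c j * √(φ t) ^ (j - 1) * (c (k - j) * √(φ t) ^ (k - j - 1)) * -Q 2 t :=
          integral_abs_mul_le_of_integral_sq_le htR (hcont j hj.1) (hcont (k - j) (by omega))
            (by have := hc j; positivity) (by have := hc (k - j); positivity)
            (neg_nonneg.2 (H.Q_two_nonpos ht))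
            (hL2 j hj.1 hj.2 R htR) (hL2 (k - j) (by omega) (by omega) R htR)
      _ = c j * c (k - j) * -Q 2 t * √(φ t) ^ (k - 2) := by
          rw [show k - 2 = (j - 1) + (k - j - 1) by omega, pow_add]; ring
  have hint : ∀ j ∈ Finset.Ico 1 k,
      IntervalIntegrable (fun x => Q j x * Q (k - j) x) volume t R := fun j hj => by
    rw [Finset.mem_Ico] at hj
    exact ((hcont j hj.1).mul (hcont (k - j) (by omega))).intervalIntegrable_of_Icc htR
  calc |∫ x in t..R, q k x|
      = |∑ j ∈ Finset.Ico 1 k, ∫ x in t..R, Q j x * Q (k - j) x| := by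
        simp only [H.q_eq_sum k hk, intervalIntegral.integral_finsetSum hint]
    _ ≤ ∑ j ∈ Finset.Ico 1 k, |∫ x in t..R, Q j x * Q (k - j) x| := Finset.abs_sum_le_sum_abs _ _
    _ ≤ ∑ j ∈ Finset.Ico 1 k, ∫ x in t..R, |Q j x * Q (k - j) x| :=
        Finset.sum_le_sum fun _ _ => intervalIntegral.abs_integral_le_integral_abs htR
    _ ≤ ∑ j ∈ Finset.Ico 1 k, c j * c (k - j) * -Q 2 t * √(φ t) ^ (k - 2) :=
        Finset.sum_le_sum hterm
    _ = (∑ j ∈ Finset.Ico 1 k, c j * c (k - j)) * -Q 2 t * √(φ t) ^ (k - 2) := by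
        rw [Finset.sum_mul, Finset.sum_mul]

theorem abs_Q_le (H : TailHierarchy T q Q φ) (hk : 2 ≤ k) (ht : T ≤ t) :
    |Q k t| ≤ catalan (k - 1) * -Q 2 t * √(φ t) ^ (k - 2) := by
  induction k using Nat.strong_induction_on generalizing t with
  | _ k ih =>
    rcases hk.eq_or_lt with rfl | hk3
    · simp [abs_of_nonpos (H.Q_two_nonpos ht)]
    have hL2 : ∀ j, 1 ≤ j → j < k → ∀ R ≥ t,
        ∫ x in t..R, Q j x ^ 2 ≤ ((catalan (j - 1) : ℝ) * √(φ t) ^ (j - 1)) ^ 2 * -Q 2 t := by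
      intro j hj hjk R htR
      rcases hj.eq_or_lt with rfl | hj2
      · simpa using H.integral_Q_one_sq_le ht htR
      · obtain ⟨n, rfl⟩ : ∃ n, j = n + 2 := ⟨j - 2, by omega⟩
        exact H.integral_sq_le_of_abs_le ht htR
          ((H.continuousOn_Q (by omega)).mono fun x hx => ht.trans hx.1)
          fun x hx => ih _ hjk (by omega) (ht.trans hx.1)
    calc |Q k t| ≤ (∑ j ∈ Finset.Ico 1 k, (catalan (j - 1) : ℝ) * catalan (k - j - 1))
          * -Q 2 t * √(φ t) ^ (k - 2) :=
          H.abs_Q_le_of_integral_sq_le hk ht (fun _ => Nat.cast_nonneg _) hL2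
      _ = catalan (k - 1) * -Q 2 t * √(φ t) ^ (k - 2) := by
          rw [← sum_Ico_catalan_pred_mul hk]; push_cast; rfl

end TailHierarchy

theorem sum_Qk_estimate_general
    (T : ℝ)
    (M : ℝ → ℝ) (hMc : ContinuousOn M (Set.Ici T))
    (q Q : ℕ → ℝ → ℝ)
    (hq1 : ∀ t, q 1 t = M t)
    (hqk : ∀ k, 2 ≤ k → ∀ t, q k t = ∑ j ∈ Finset.Ico 1 k, Q j t * Q (k - j) t)
    -- `Q k t = -∫_t^∞ q k`, all these improper integrals being convergent
    (hQ : ∀ k, 1 ≤ k → ∀ t ≥ T,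
      Tendsto (fun R => ∫ s in t..R, q k s) atTop (𝓝 (-(Q k t))))
    -- `φ t = -∫_t^∞ Q₂`, assumed finite
    (φ : ℝ → ℝ)
    (hφ : ∀ t ≥ T,
      Tendsto (fun R => ∫ s in t..R, Q 2 s) atTop (𝓝 (-(φ t))))
    -- `φ(t) ≤ 6⁻⁴` for all `t ≥ T`
    (hφbd : ∀ t ≥ T, φ t ≤ 1 / 6 ^ 4) :
    ∀ t ≥ T, Summable (fun k : ℕ => |Q (k + 2) t|) ∧
      ∑' k : ℕ, |Q (k + 2) t| ≤ 3 / 2 * |Q 2 t| := by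
  have H : TailHierarchy T q Q φ :=
    ⟨hMc.congr fun t _ => hq1 t, hqk, hQ, hφ⟩
  intro t ht
  have hQ2 : 0 ≤ -Q 2 t := neg_nonneg.2 (H.Q_two_nonpos ht)
  have hψ : √(φ t) ≤ 1 / 36 :=
    (Real.sqrt_le_left (by norm_num)).2 (by convert hφbd t ht using 1; norm_num)
  have hgeo : ∀ n, |Q (n + 3) t| ≤ 4 / 9 * |Q 2 t| * (1 / 9) ^ n := by
    intro n
    calc |Q (n + 3) t| ≤ catalan (n + 2) * -Q 2 t * √(φ t) ^ (n + 1) := by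
          simpa using H.abs_Q_le (k := n + 3) (by omega) ht
      _ ≤ 4 ^ (n + 2) * -Q 2 t * (1 / 36) ^ (n + 1) := by
          gcongr
          exact_mod_cast catalan_le_four_pow (n + 2)
      _ = 4 / 9 * |Q 2 t| * (1 / 9) ^ n := by
          rw [abs_of_nonpos (neg_nonneg.1 hQ2), show (1 / 9 : ℝ) = 4 * (1 / 36) by norm_num,
            mul_pow]
          ring
  obtain ⟨hs, hle⟩ := summable_and_tsum_le_of_le_geometric (fun n => abs_nonneg _) hgeo
    (by norm_num) (by norm_num)
  have hs' : Summable fun k : ℕ => |Q (k + 2) t| := (summable_nat_add_iff 1).1 hs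
  refine ⟨hs', ?_⟩
  rw [hs'.tsum_eq_zero_add]
  norm_num at hle ⊢
  linarith

/-- Estimate (est_sumQk) of Lemma 3.3: if `|∫_t^∞ Q₁| ≤ 1` and `φ(t) ≤ 6⁻⁴` on
`[T,∞)`, then `Σ_{k=2}^∞ |Q_k(t)|` converges and is at most `(3/2)|Q₂(t)|`. -/
theorem sum_Qk_estimate
    (T : ℝ) (hT : 0 ≤ T)
    (M : ℝ → ℝ) (hMc : ContinuousOn M (Set.Ici T))
    (q Q : ℕ → ℝ → ℝ)
    (hq1 : ∀ t, q 1 t = M t)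
    (hqk : ∀ k, 2 ≤ k → ∀ t, q k t = ∑ j ∈ Finset.Ico 1 k, Q j t * Q (k - j) t)
    -- `Q k t = -∫_t^∞ q k`, all these improper integrals being convergent
    (hQ : ∀ k, 1 ≤ k → ∀ t ≥ T,
      Tendsto (fun R => ∫ s in t..R, q k s) atTop (𝓝 (-(Q k t))))
    -- `φ t = -∫_t^∞ Q₂`, assumed finite
    (φ : ℝ → ℝ)
    (hφ : ∀ t ≥ T,
      Tendsto (fun R => ∫ s in t..R, Q 2 s) atTop (𝓝 (-(φ t))))
    -- `|∫_t^∞ Q₁(s) ds| ≤ 1` for all `t ≥ T`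
    (IQ1 : ℝ → ℝ)
    (hIQ1 : ∀ t ≥ T,
      Tendsto (fun R => ∫ s in t..R, Q 1 s) atTop (𝓝 (IQ1 t)))
    (hIQ1bd : ∀ t ≥ T, |IQ1 t| ≤ 1)
    -- `φ(t) ≤ 6⁻⁴` for all `t ≥ T`
    (hφbd : ∀ t ≥ T, φ t ≤ 1 / 6 ^ 4) :
    ∀ t ≥ T, Summable (fun k : ℕ => |Q (k + 2) t|) ∧
      ∑' k : ℕ, |Q (k + 2) t| ≤ 3 / 2 * |Q 2 t| :=
  sum_Qk_estimate_general T M hMc q Q hq1 hqk hQ φ hφ hφbd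
end

section
/- Let T ≥ 0, let α < 0 and β with 2β ≥ α + 1, and let b : [T,∞) → ℝ be continuously differentiable. Suppose there are constants b₀, b₁, b₂ > 0 such that for all T ≤ s ≤ t: |∫_s^t b(σ) dσ| ≤ b₀, |b(t)| ≤ b₁(1+t)^{−α}, and |b'(t)| ≤ b₂(1+t)^{−2β}. Then there exist constants N ≥ 2b₁ and K₁ > 0 such that for every r > 0 and every twice continuously differentiable solution w : [T,∞) → ℂ of w''(t) + r² w(t) + 2b(t) w'(t) = 0, setting t_r := max{T, (N r^{−1})^{1/α} − 1} and |W(t)|² := |w'(t)|² + r²|w(t)|², one has K₁^{−1} |W(T)| ≤ |W(t)| ≤ K₁ |W(T)| for all t with T ≤ t ≤ t_r, with K₁ independent of r and of w. -/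
/-!
In the hyperbolic zone `|b| ≤ r / 2`, so the first-order system for `W = (w', i r w)` can be
diagonalised. Concretely, the corrected energy `Q = |w'|² + r²|w|² + 2b⟪w', w⟫` is comparable
to `|W|²` within a factor 2 and satisfies `Q' = -2bQ + 2b'⟪w', w⟫`, where the last term is at
most `(2/r)|b'| Q`. Gronwall's inequality bounds `log (Q(t) / Q(T))` by `2|∫ b| + (2/r)∫ |b'|`.
The first term is at most `2b₀`; as `2β ≥ α + 1`, `|b'| ≤ b₂(1+s)^(-α-1)`, whose primitive is
`(1+s)^(-α) / (-α) ≤ r / (-αN)` in the zone, so the second term is bounded independently of `r`.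
-/

open MeasureTheory Set Real
open scoped RealInnerProductSpace

theorem le_exp_sub_mul_of_deriv_le {f φ f' φ' : ℝ → ℝ} {a b : ℝ} (hab : a ≤ b)
    (hf : ContinuousOn f (Icc a b)) (hφ : ContinuousOn φ (Icc a b))
    (hf' : ∀ x ∈ Ioo a b, HasDerivAt f (f' x) x) (hφ' : ∀ x ∈ Ioo a b, HasDerivAt φ (φ' x) x)
    (h : ∀ x ∈ Ioo a b, f' x ≤ φ' x * f x) :
    f b ≤ exp (φ b - φ a) * f a := by
  have hanti : AntitoneOn (fun x => exp (-φ x) * f x) (Icc a b) := by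
    refine antitoneOn_of_hasDerivWithinAt_nonpos (convex_Icc a b)
      ((hφ.neg.rexp).mul hf) (f' := fun x => exp (-φ x) * (f' x - φ' x * f x)) ?_ ?_
    · intro x hx
      rw [interior_Icc] at hx
      refine ((((hφ' x hx).neg.exp).mul (hf' x hx)).congr_deriv ?_).hasDerivWithinAt
      simp only [Pi.neg_apply]
      ring
    · intro x hx
      rw [interior_Icc] at hx
      exact mul_nonpos_of_nonneg_of_nonpos (exp_pos _).le (sub_nonpos.2 (h x hx))
  have := hanti (left_mem_Icc.2 hab) (right_mem_Icc.2 hab) hab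
  rw [sub_eq_add_neg, exp_add, mul_assoc, ← inv_mul_le_iff₀ (exp_pos _), ← exp_neg]
  exact this

theorem exp_sub_mul_le_of_le_deriv {f φ f' φ' : ℝ → ℝ} {a b : ℝ} (hab : a ≤ b)
    (hf : ContinuousOn f (Icc a b)) (hφ : ContinuousOn φ (Icc a b))
    (hf' : ∀ x ∈ Ioo a b, HasDerivAt f (f' x) x) (hφ' : ∀ x ∈ Ioo a b, HasDerivAt φ (φ' x) x)
    (h : ∀ x ∈ Ioo a b, φ' x * f x ≤ f' x) :
    exp (φ b - φ a) * f a ≤ f b := by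
  have := le_exp_sub_mul_of_deriv_le hab hf.neg hφ (fun x hx => (hf' x hx).neg) hφ'
    (fun x hx => by simpa using h x hx)
  simpa using this

theorem hasDerivAt_integral_of_continuousOn {f : ℝ → ℝ} {a b x : ℝ}
    (hf : ContinuousOn f (Icc a b)) (hx : x ∈ Ioo a b) :
    HasDerivAt (fun y => ∫ s in a..y, f s) (f x) x :=
  intervalIntegral.integral_hasDerivAt_right
    ((hf.mono (Icc_subset_Icc_right hx.2.le)).intervalIntegrable_of_Icc hx.1.le)
    ((hf.mono Ioo_subset_Icc_self).stronglyMeasurableAtFilter isOpen_Ioo x hx)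
    (hf.continuousAt (Icc_mem_nhds hx.1 hx.2))

section Energy

variable {F : Type*} [NormedAddCommGroup F]

def waveEnergy (r : ℝ) (u v : F) : ℝ := ‖v‖ ^ 2 + r ^ 2 * ‖u‖ ^ 2

theorem waveEnergy_nonneg (r : ℝ) (u v : F) : 0 ≤ waveEnergy r u v := by
  unfold waveEnergy; positivity

variable [InnerProductSpace ℝ F]

def modifiedEnergy (r c : ℝ) (u v : F) : ℝ := waveEnergy r u v + 2 * c * ⟪v, u⟫

theorem abs_two_mul_inner_le_waveEnergy {r : ℝ} (hr : 0 < r) (d : ℝ) (u v : F) :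
    |2 * d * ⟪v, u⟫| ≤ |d| / r * waveEnergy r u v := by
  have hamgm : 2 * r * (‖v‖ * ‖u‖) ≤ waveEnergy r u v := by
    unfold waveEnergy; nlinarith [sq_nonneg (‖v‖ - r * ‖u‖)]
  calc |2 * d * ⟪v, u⟫| ≤ 2 * |d| * (‖v‖ * ‖u‖) := by
        rw [abs_mul, abs_mul, abs_two]
        gcongr
        exact abs_real_inner_le_norm v u
    _ = |d| / r * (2 * r * (‖v‖ * ‖u‖)) := by field_simp
    _ ≤ |d| / r * waveEnergy r u v := by gcongr

theorem abs_two_mul_inner_le_half_waveEnergy {r c : ℝ} (hr : 0 < r) (hc : |c| ≤ r / 2)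
    (u v : F) : |2 * c * ⟪v, u⟫| ≤ waveEnergy r u v / 2 := by
  refine (abs_two_mul_inner_le_waveEnergy hr c u v).trans ?_
  have : |c| / r ≤ 1 / 2 := (div_le_iff₀ hr).2 (by linarith)
  nlinarith [waveEnergy_nonneg r u v]

theorem waveEnergy_le_two_mul_modifiedEnergy {r c : ℝ} (hr : 0 < r) (hc : |c| ≤ r / 2)
    (u v : F) : waveEnergy r u v ≤ 2 * modifiedEnergy r c u v := by
  have := (abs_le.1 (abs_two_mul_inner_le_half_waveEnergy hr hc u v)).1
  unfold modifiedEnergy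
  linarith

theorem two_mul_modifiedEnergy_le {r c : ℝ} (hr : 0 < r) (hc : |c| ≤ r / 2)
    (u v : F) : 2 * modifiedEnergy r c u v ≤ 3 * waveEnergy r u v := by
  have := (abs_le.1 (abs_two_mul_inner_le_half_waveEnergy hr hc u v)).2
  unfold modifiedEnergy
  linarith

theorem HasDerivWithinAt.modifiedEnergy {s : Set ℝ} {x r db : ℝ} {b : ℝ → ℝ} {w w' : ℝ → F}
    {a : F} (hb : HasDerivWithinAt b db s x) (hw : HasDerivWithinAt w (w' x) s x)
    (hw' : HasDerivWithinAt w' a s x) (hode : a + r ^ 2 • w x + (2 * b x) • w' x = 0) :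
    HasDerivWithinAt (fun t => modifiedEnergy r (b t) (w t) (w' t))
      (-2 * b x * modifiedEnergy r (b x) (w x) (w' x) + 2 * db * ⟪w' x, w x⟫) s x := by
  have ha : a = -(r ^ 2 • w x) - (2 * b x) • w' x := by
    rw [← sub_eq_zero, ← hode]; abel
  have h := (hw'.norm_sq.add (hw.norm_sq.const_mul (r ^ 2))).add
    ((hb.const_mul 2).mul (hw'.inner ℝ hw))
  refine h.congr_deriv ?_
  simp only [_root_.modifiedEnergy, waveEnergy, ha, inner_sub_left, inner_sub_right,
    inner_neg_left, inner_neg_right, inner_smul_left, inner_smul_right,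
    real_inner_self_eq_norm_sq, real_inner_comm (w x) (w' x), RCLike.conj_to_real]
  ring

theorem modifiedEnergy_le_exp_mul {r t₀ t₁ : ℝ} (hr : 0 < r) (ht : t₀ ≤ t₁)
    {b b' ψ ψ' : ℝ → ℝ} {w w' w'' : ℝ → F}
    (hb : ∀ x ∈ Icc t₀ t₁, HasDerivWithinAt b (b' x) (Icc t₀ t₁) x)
    (hw : ∀ x ∈ Icc t₀ t₁, HasDerivWithinAt w (w' x) (Icc t₀ t₁) x)
    (hw' : ∀ x ∈ Icc t₀ t₁, HasDerivWithinAt w' (w'' x) (Icc t₀ t₁) x)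
    (hode : ∀ x ∈ Icc t₀ t₁, w'' x + r ^ 2 • w x + (2 * b x) • w' x = 0)
    (hzone : ∀ x ∈ Icc t₀ t₁, |b x| ≤ r / 2)
    (hψ : ContinuousOn ψ (Icc t₀ t₁)) (hψ' : ∀ x ∈ Ioo t₀ t₁, HasDerivAt ψ (ψ' x) x)
    (hb'ψ' : ∀ x ∈ Ioo t₀ t₁, 2 / r * |b' x| ≤ ψ' x) :
    modifiedEnergy r (b t₁) (w t₁) (w' t₁) ≤
        exp (-2 * (∫ x in t₀..t₁, b x) + (ψ t₁ - ψ t₀)) * modifiedEnergy r (b t₀) (w t₀) (w' t₀) ∧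
      exp (-2 * (∫ x in t₀..t₁, b x) - (ψ t₁ - ψ t₀)) * modifiedEnergy r (b t₀) (w t₀) (w' t₀) ≤
        modifiedEnergy r (b t₁) (w t₁) (w' t₁) := by
  set Q := fun x => modifiedEnergy r (b x) (w x) (w' x)
  have hQ : ∀ x ∈ Icc t₀ t₁, HasDerivWithinAt Q
      (-2 * b x * Q x + 2 * b' x * ⟪w' x, w x⟫) (Icc t₀ t₁) x := fun x hx =>
    (hb x hx).modifiedEnergy (hw x hx) (hw' x hx) (hode x hx)
  have hQc : ContinuousOn Q (Icc t₀ t₁) := fun x hx => (hQ x hx).continuousWithinAt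
  have hQ' : ∀ x ∈ Ioo t₀ t₁, HasDerivAt Q (-2 * b x * Q x + 2 * b' x * ⟪w' x, w x⟫) x :=
    fun x hx => (hQ x (Ioo_subset_Icc_self hx)).hasDerivAt (Icc_mem_nhds hx.1 hx.2)
  have herr : ∀ x ∈ Ioo t₀ t₁, |2 * b' x * ⟪w' x, w x⟫| ≤ ψ' x * Q x := by
    intro x hx
    have hE := waveEnergy_le_two_mul_modifiedEnergy hr (hzone x (Ioo_subset_Icc_self hx))
      (w x) (w' x)
    have hQnn : 0 ≤ Q x := by linarith [waveEnergy_nonneg r (w x) (w' x)]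
    calc |2 * b' x * ⟪w' x, w x⟫| ≤ |b' x| / r * waveEnergy r (w x) (w' x) :=
          abs_two_mul_inner_le_waveEnergy hr _ _ _
      _ ≤ |b' x| / r * (2 * Q x) := by gcongr
      _ = 2 / r * |b' x| * Q x := by ring
      _ ≤ ψ' x * Q x := by gcongr; exact hb'ψ' x hx
  have hbc : ContinuousOn b (Icc t₀ t₁) := fun x hx => (hb x hx).continuousWithinAt
  have hB : ContinuousOn (fun y => ∫ s in t₀..y, b s) (Icc t₀ t₁) := by
    rw [← uIcc_of_le ht] at hbc ⊢
    exact intervalIntegral.continuousOn_primitive_interval (hbc.integrableOn_compact isCompact_uIcc)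
  have hB' : ∀ x ∈ Ioo t₀ t₁, HasDerivAt (fun y => ∫ s in t₀..y, b s) (b x) x :=
    fun x hx => hasDerivAt_integral_of_continuousOn hbc hx
  constructor
  · have := le_exp_sub_mul_of_deriv_le (φ := fun y => -2 * (∫ s in t₀..y, b s) + ψ y)
      (φ' := fun x => -2 * b x + ψ' x) ht hQc ((continuousOn_const.mul hB).add hψ) hQ'
      (fun x hx => ((hB' x hx).const_mul (-2)).add (hψ' x hx))
      (fun x hx => by linarith [(abs_le.1 (herr x hx)).2])
    convert this using 3
    simp only [intervalIntegral.integral_same]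
    ring
  · have := exp_sub_mul_le_of_le_deriv (φ := fun y => -2 * (∫ s in t₀..y, b s) - ψ y)
      (φ' := fun x => -2 * b x - ψ' x) ht hQc ((continuousOn_const.mul hB).sub hψ) hQ'
      (fun x hx => ((hB' x hx).const_mul (-2)).sub (hψ' x hx))
      (fun x hx => by linarith [(abs_le.1 (herr x hx)).1])
    convert this using 3
    simp only [intervalIntegral.integral_same]
    ring

theorem waveEnergy_le_exp_mul {r t₀ t₁ M : ℝ} (hr : 0 < r) (ht : t₀ ≤ t₁)
    {b b' ψ ψ' : ℝ → ℝ} {w w' w'' : ℝ → F}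
    (hb : ∀ x ∈ Icc t₀ t₁, HasDerivWithinAt b (b' x) (Icc t₀ t₁) x)
    (hw : ∀ x ∈ Icc t₀ t₁, HasDerivWithinAt w (w' x) (Icc t₀ t₁) x)
    (hw' : ∀ x ∈ Icc t₀ t₁, HasDerivWithinAt w' (w'' x) (Icc t₀ t₁) x)
    (hode : ∀ x ∈ Icc t₀ t₁, w'' x + r ^ 2 • w x + (2 * b x) • w' x = 0)
    (hzone : ∀ x ∈ Icc t₀ t₁, |b x| ≤ r / 2)
    (hψ : ContinuousOn ψ (Icc t₀ t₁)) (hψ' : ∀ x ∈ Ioo t₀ t₁, HasDerivAt ψ (ψ' x) x)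
    (hb'ψ' : ∀ x ∈ Ioo t₀ t₁, 2 / r * |b' x| ≤ ψ' x)
    (hM : 2 * |∫ x in t₀..t₁, b x| + |ψ t₁ - ψ t₀| ≤ M) :
    waveEnergy r (w t₁) (w' t₁) ≤ 3 * exp M * waveEnergy r (w t₀) (w' t₀) ∧
      waveEnergy r (w t₀) (w' t₀) ≤ 3 * exp M * waveEnergy r (w t₁) (w' t₁) := by
  obtain ⟨hup, hdown⟩ :=
    modifiedEnergy_le_exp_mul hr ht hb hw hw' hode hzone hψ hψ' hb'ψ'
  have hz₀ := hzone t₀ (left_mem_Icc.2 ht)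
  have hz₁ := hzone t₁ (right_mem_Icc.2 ht)
  have hE₀ := waveEnergy_le_two_mul_modifiedEnergy hr hz₀ (w t₀) (w' t₀)
  have hE₁ := waveEnergy_le_two_mul_modifiedEnergy hr hz₁ (w t₁) (w' t₁)
  have hQ₀ := two_mul_modifiedEnergy_le hr hz₀ (w t₀) (w' t₀)
  have hQ₁ := two_mul_modifiedEnergy_le hr hz₁ (w t₁) (w' t₁)
  set Q₀ := modifiedEnergy r (b t₀) (w t₀) (w' t₀)
  set Q₁ := modifiedEnergy r (b t₁) (w t₁) (w' t₁)
  set I := ∫ x in t₀..t₁, b x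
  have hQ₀nn : 0 ≤ Q₀ := by linarith [waveEnergy_nonneg r (w t₀) (w' t₀)]
  have hQ₁_le : Q₁ ≤ exp M * Q₀ := by
    refine hup.trans (mul_le_mul_of_nonneg_right (exp_le_exp.2 ?_) hQ₀nn)
    linarith [neg_abs_le I, le_abs_self (ψ t₁ - ψ t₀)]
  have hQ₀_le : Q₀ ≤ exp M * Q₁ := by
    rw [← inv_mul_le_iff₀ (exp_pos M), ← exp_neg]
    refine (mul_le_mul_of_nonneg_right (exp_le_exp.2 ?_) hQ₀nn).trans hdown
    linarith [le_abs_self I, le_abs_self (ψ t₁ - ψ t₀)]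
  constructor <;> nlinarith [exp_pos M]

end Energy

theorem rpow_neg_le_inv_of_le_rpow_one_div {α x y : ℝ} (hα : α < 0) (hx : 0 ≤ x) (hy : 0 < y)
    (h : x ≤ y ^ (1 / α)) : x ^ (-α) ≤ y⁻¹ := by
  calc x ^ (-α) ≤ (y ^ (1 / α)) ^ (-α) := rpow_le_rpow hx h (by linarith)
    _ = y⁻¹ := by rw [← rpow_mul hy.le, one_div_mul_eq_div, neg_div, div_self hα.ne, rpow_neg_one]

theorem hasDerivAt_one_add_rpow (p : ℝ) {x : ℝ} (hx : 0 < 1 + x) :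
    HasDerivAt (fun y => (1 + y) ^ p) (p * (1 + x) ^ (p - 1)) x := by
  simpa using ((hasDerivAt_id x).const_add 1).rpow_const (p := p) (Or.inl hx.ne')

theorem waveEnergy_le_exp_mul_in_hyperbolicZone {F : Type*} [NormedAddCommGroup F]
    [InnerProductSpace ℝ F] {T t r α β N b₀ b₁ b₂ : ℝ} (hT : 0 ≤ T) (hTt : T ≤ t) (hr : 0 < r)
    (hα : α < 0) (hβ : α + 1 ≤ 2 * β) (hN : 0 < N) (hb₁N : 2 * b₁ ≤ N) (hb₂ : 0 ≤ b₂)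
    (hzone : N * (1 + t) ^ (-α) ≤ r) {b b' : ℝ → ℝ} {w w' w'' : ℝ → F}
    (hbd : ∀ x ∈ Icc T t, HasDerivWithinAt b (b' x) (Icc T t) x)
    (hib : |∫ x in T..t, b x| ≤ b₀)
    (hb : ∀ x ∈ Icc T t, |b x| ≤ b₁ * (1 + x) ^ (-α))
    (hb' : ∀ x ∈ Icc T t, |b' x| ≤ b₂ * (1 + x) ^ (-(2 * β)))
    (hw : ∀ x ∈ Icc T t, HasDerivWithinAt w (w' x) (Icc T t) x)
    (hw' : ∀ x ∈ Icc T t, HasDerivWithinAt w' (w'' x) (Icc T t) x)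
    (hode : ∀ x ∈ Icc T t, w'' x + r ^ 2 • w x + (2 * b x) • w' x = 0) :
    waveEnergy r (w t) (w' t) ≤
        3 * exp (2 * b₀ + 2 * b₂ / (-α * N)) * waveEnergy r (w T) (w' T) ∧
      waveEnergy r (w T) (w' T) ≤
        3 * exp (2 * b₀ + 2 * b₂ / (-α * N)) * waveEnergy r (w t) (w' t) := by
  have h1x : ∀ x ∈ Icc T t, 0 < 1 + x := fun x hx => by linarith [hx.1]
  have hpow : ∀ x ∈ Icc T t, 0 ≤ (1 + x) ^ (-α) ∧ (1 + x) ^ (-α) ≤ r / N := fun x hx =>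
    ⟨rpow_nonneg (h1x x hx).le _,
      (rpow_le_rpow (h1x x hx).le (by linarith [hx.2]) (by linarith)).trans
        ((le_div_iff₀' hN).2 hzone)⟩
  set c := 2 * b₂ / (r * -α)
  have hψ' : ∀ x ∈ Icc T t, HasDerivAt (fun y => c * (1 + y) ^ (-α))
      (2 / r * (b₂ * (1 + x) ^ (-α - 1))) x := fun x hx =>
    ((hasDerivAt_one_add_rpow (-α) (h1x x hx)).const_mul c).congr_deriv (by
      simp only [c]; field_simp [hα.ne])
  refine waveEnergy_le_exp_mul hr hTt hbd hw hw' hode ?_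
    (fun x hx => (hψ' x hx).continuousAt.continuousWithinAt)
    (fun x hx => hψ' x (Ioo_subset_Icc_self hx)) ?_ ?_
  · intro x hx
    obtain ⟨hp₀, hp⟩ := hpow x hx
    calc |b x| ≤ b₁ * (1 + x) ^ (-α) := hb x hx
      _ ≤ N / 2 * (1 + x) ^ (-α) := mul_le_mul_of_nonneg_right (by linarith) hp₀
      _ ≤ N / 2 * (r / N) := mul_le_mul_of_nonneg_left hp (by linarith)
      _ = r / 2 := by field_simp
  · intro x hx
    have hx' := Ioo_subset_Icc_self hx
    calc 2 / r * |b' x| ≤ 2 / r * (b₂ * (1 + x) ^ (-(2 * β))) := by gcongr; exact hb' x hx'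
      _ ≤ 2 / r * (b₂ * (1 + x) ^ (-α - 1)) := by
        gcongr
        exacts [by linarith [hx.1], by linarith]
  · have hψ_le : ∀ x ∈ Icc T t, 0 ≤ c * (1 + x) ^ (-α) ∧ c * (1 + x) ^ (-α) ≤ 2 * b₂ / (-α * N) :=
      fun x hx => by
        obtain ⟨hp₀, hp⟩ := hpow x hx
        have hc : 0 ≤ c := div_nonneg (by linarith) (mul_nonneg hr.le (by linarith))
        refine ⟨mul_nonneg hc hp₀, (mul_le_mul_of_nonneg_left hp hc).trans_eq ?_⟩
        simp only [c]; field_simp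
    have hT' := hψ_le T (left_mem_Icc.2 hTt)
    have ht' := hψ_le t (right_mem_Icc.2 hTt)
    linarith [abs_sub_le_of_nonneg_of_le ht'.1 ht'.2 hT'.1 hT'.2]

theorem inv_sqrt_mul_sqrt_le_and_sqrt_le_sqrt_mul {x y c : ℝ} (hc : 0 ≤ c)
    (hyx : y ≤ c * x) (hxy : x ≤ c * y) : (√c)⁻¹ * √x ≤ √y ∧ √y ≤ √c * √x := by
  refine ⟨?_, by rw [← sqrt_mul hc]; exact sqrt_le_sqrt hyx⟩
  rcases hc.eq_or_lt with rfl | hc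
  · simp
  · rw [inv_mul_le_iff₀ (sqrt_pos.2 hc), ← sqrt_mul hc.le]
    exact sqrt_le_sqrt hxy

theorem zone_ZH_estimate_neg_general
    (T : ℝ) (hT : 0 ≤ T)
    (α β : ℝ) (hα0 : α < 0) (hβ : α + 1 ≤ 2 * β)
    (b b' : ℝ → ℝ)
    (hbd : ∀ t ∈ Set.Ici T, HasDerivWithinAt b (b' t) (Set.Ici T) t)
    (b₀ b₁ b₂ : ℝ) (hb₀ : 0 < b₀) (hb₁ : 0 < b₁) (hb₂ : 0 < b₂)
    (hib : ∀ s t : ℝ, T ≤ s → s ≤ t → |∫ σ in s..t, b σ| ≤ b₀)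
    (hb : ∀ t ≥ T, |b t| ≤ b₁ * (1 + t) ^ (-α))
    (hb' : ∀ t ≥ T, |b' t| ≤ b₂ * (1 + t) ^ (-(2 * β))) :
    ∃ N : ℝ, 2 * b₁ ≤ N ∧ ∃ K₁ > (0:ℝ), ∀ r : ℝ, 0 < r →
      ∀ w w' w'' : ℝ → ℂ,
        (∀ t ∈ Set.Ici T, HasDerivWithinAt w (w' t) (Set.Ici T) t) →
        (∀ t ∈ Set.Ici T, HasDerivWithinAt w' (w'' t) (Set.Ici T) t) →
        ContinuousOn w'' (Set.Ici T) →
        (∀ t ≥ T, w'' t + (r : ℂ) ^ 2 * w t + 2 * (b t : ℂ) * w' t = 0) →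
        ∀ tr : ℝ, tr = max T ((N * r⁻¹) ^ (1 / α) - 1) →
          ∀ t : ℝ, T ≤ t → t ≤ tr →
            K₁⁻¹ * Real.sqrt (‖w' T‖ ^ 2 + r ^ 2 * ‖w T‖ ^ 2)
              ≤ Real.sqrt (‖w' t‖ ^ 2 + r ^ 2 * ‖w t‖ ^ 2) ∧
            Real.sqrt (‖w' t‖ ^ 2 + r ^ 2 * ‖w t‖ ^ 2)
              ≤ K₁ * Real.sqrt (‖w' T‖ ^ 2 + r ^ 2 * ‖w T‖ ^ 2) := by
  set N := 2 * b₁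
  set M := 2 * b₀ + 2 * b₂ / (-α * N)
  have hM : 0 ≤ M := by
    have : 0 < -α := by linarith
    positivity
  refine ⟨N, le_rfl, √(3 * exp M), by positivity, ?_⟩
  intro r hr w w' w'' hw hw' _ hode tr htr t hTt htrt
  suffices h : waveEnergy r (w t) (w' t) ≤ 3 * exp M * waveEnergy r (w T) (w' T) ∧
      waveEnergy r (w T) (w' T) ≤ 3 * exp M * waveEnergy r (w t) (w' t) from
    inv_sqrt_mul_sqrt_le_and_sqrt_le_sqrt_mul (by positivity) h.1 h.2
  -- For `t = T` the time `T` itself may lie outside the zone, where nothing controls `b`.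
  rcases hTt.eq_or_lt with rfl | hTt'
  · have : 1 ≤ 3 * exp M := by linarith [one_le_exp hM]
    constructor <;> nlinarith [waveEnergy_nonneg r (w T) (w' T)]
  have ht : t ≤ (N * r⁻¹) ^ (1 / α) - 1 :=
    (le_max_iff.1 (htr ▸ htrt)).resolve_left (not_le.2 hTt')
  have hzone : N * (1 + t) ^ (-α) ≤ r := by
    have := rpow_neg_le_inv_of_le_rpow_one_div (x := 1 + t) (y := N * r⁻¹) hα0 (by linarith)
      (by positivity) (by linarith)
    rwa [mul_inv, inv_inv, ← div_eq_inv_mul, le_div_iff₀' (by positivity)] at this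
  exact waveEnergy_le_exp_mul_in_hyperbolicZone hT hTt hr hα0 hβ (by positivity) le_rfl
    hb₂.le hzone (fun x hx => (hbd x hx.1).mono Icc_subset_Ici_self) (hib T t le_rfl hTt)
    (fun x hx => hb x hx.1) (fun x hx => hb' x hx.1)
    (fun x hx => (hw x hx.1).mono Icc_subset_Ici_self)
    (fun x hx => (hw' x hx.1).mono Icc_subset_Ici_self)
    (fun x hx => by simpa [Complex.real_smul] using hode x hx.1)

/-- Proposition 3.4 (estimate in the hyperbolic zone `Z_H`), case `α < 0`:
for `T ≤ t ≤ t_r = max{T, (N r⁻¹)^(1/α) - 1}`, the energy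
`|W(t)| = √(|w'(t)|² + r²|w(t)|²)` of a solution of `w'' + r²w + 2bw' = 0`
is comparable to `|W(T)|`, uniformly in `r` and `w`. -/
theorem zone_ZH_estimate_neg
    (T : ℝ) (hT : 0 ≤ T)
    (α β : ℝ) (hα0 : α < 0) (hβ : α + 1 ≤ 2 * β)
    (b b' : ℝ → ℝ)
    (hbd : ∀ t ∈ Set.Ici T, HasDerivWithinAt b (b' t) (Set.Ici T) t)
    (hb'c : ContinuousOn b' (Set.Ici T))
    (b₀ b₁ b₂ : ℝ) (hb₀ : 0 < b₀) (hb₁ : 0 < b₁) (hb₂ : 0 < b₂)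
    (hib : ∀ s t : ℝ, T ≤ s → s ≤ t → |∫ σ in s..t, b σ| ≤ b₀)
    (hb : ∀ t ≥ T, |b t| ≤ b₁ * (1 + t) ^ (-α))
    (hb' : ∀ t ≥ T, |b' t| ≤ b₂ * (1 + t) ^ (-(2 * β))) :
    ∃ N : ℝ, 2 * b₁ ≤ N ∧ ∃ K₁ > (0:ℝ), ∀ r : ℝ, 0 < r →
      ∀ w w' w'' : ℝ → ℂ,
        (∀ t ∈ Set.Ici T, HasDerivWithinAt w (w' t) (Set.Ici T) t) →
        (∀ t ∈ Set.Ici T, HasDerivWithinAt w' (w'' t) (Set.Ici T) t) →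
        ContinuousOn w'' (Set.Ici T) →
        (∀ t ≥ T, w'' t + (r : ℂ) ^ 2 * w t + 2 * (b t : ℂ) * w' t = 0) →
        ∀ tr : ℝ, tr = max T ((N * r⁻¹) ^ (1 / α) - 1) →
          ∀ t : ℝ, T ≤ t → t ≤ tr →
            K₁⁻¹ * Real.sqrt (‖w' T‖ ^ 2 + r ^ 2 * ‖w T‖ ^ 2)
              ≤ Real.sqrt (‖w' t‖ ^ 2 + r ^ 2 * ‖w t‖ ^ 2) ∧
            Real.sqrt (‖w' t‖ ^ 2 + r ^ 2 * ‖w t‖ ^ 2)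
              ≤ K₁ * Real.sqrt (‖w' T‖ ^ 2 + r ^ 2 * ‖w T‖ ^ 2) :=
  zone_ZH_estimate_neg_general T hT α β hα0 hβ b b' hbd b₀ b₁ b₂ hb₀ hb₁ hb₂ hib hb hb'
end
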